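/- Let 0 ≤ k ≤ n, let μ ⊢ k, let λ ⊢ n with λ/μ a horizontal strip, and let (s, t) be the canonical pair of standard Young tableaux for (μ, λ). Let K = diag(S_k) × S_{n−k} ≤ S_k × S_n, i.e., the subgroup of pairs (π, ρ) where ρ restricted to [k] equals π and ρ fixes the set {k+1,…,n}. Then for every K-orbit C ⊆ S_{k,n}: Σ_{σ ∈ C} Σ_{π ∈ C_s} Σ_{π' ∈ C_t} sgn(π)·sgn(π')·1[({πs},{π't}) covers σ] = (μ^⊤)! · Σ_{σ ∈ C} Σ_{π ∈ C_t} sgn(π)·1[({s},{πt}) covers σ], where (μ^⊤)! = ∏_j (μ^⊤_j)!. -/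

import Mathlib

open scoped Classical

/-- The sequence of parts of a partition of `m`, in weakly decreasing order, indexed from 0
(and equal to `0` beyond the last part): `partFun p i` is the `(i+1)`-st largest part. -/
noncomputable def partFun {m : ℕ} (p : Nat.Partition m) (i : ℕ) : ℕ :=
  sSup {a | i < Multiset.card (p.parts.filter (fun x => a ≤ x))}

/-- `lam/mu` is a horizontal strip: `mu i ≤ lam i` for all rows `i`, and no column contains
two cells of `lam/mu` (equivalently `lam (i+1) ≤ mu i`). -/
def IsHorizStrip (mu lam : ℕ → ℕ) : Prop :=
  ∀ i, mu i ≤ lam i ∧ lam (i + 1) ≤ mu i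

/-- The height of column `j` of the Young diagram with row lengths `mu` (for `mu` weakly
decreasing this is `#{i : mu i > j}`), i.e. the `j`-th part of the conjugate partition. -/
noncomputable def colHeight (mu : ℕ → ℕ) (j : ℕ) : ℕ :=
  sInf {i | mu i ≤ j}

/-- The row of the (0-indexed) value `v` in the canonical standard Young tableau of shape
`mu`, obtained by inserting `0, 1, …` into the rows from left to right, top to bottom. -/
noncomputable def canonRow (mu : ℕ → ℕ) (v : ℕ) : ℕ :=
  sInf {i | v < ∑ a ∈ Finset.range (i + 1), mu a}

/-- The column of the (0-indexed) value `v` in the canonical standard Young tableau of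
shape `mu`. -/
noncomputable def canonCol (mu : ℕ → ℕ) (v : ℕ) : ℕ :=
  v - ∑ a ∈ Finset.range (canonRow mu v), mu a

/-- The canonical standard Young tableau `s` of shape `mu ⊢ k`, encoded by the position
`(row, column)` of each of the values `0, …, k-1` (0-indexed). -/
noncomputable def canonPosS (mu : ℕ → ℕ) (k : ℕ) : Fin k → ℕ × ℕ :=
  fun v => (canonRow mu (v : ℕ), canonCol mu (v : ℕ))

/-- The (sorted, increasing) list of indices of the columns containing a cell of the
horizontal strip `lam/mu`. -/
noncomputable def stripCols (mu lam : ℕ → ℕ) : List ℕ :=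
  ((Finset.range (lam 0)).filter (fun j => colHeight mu j < colHeight lam j)).sort (· ≤ ·)

/-- The canonical standard Young tableau `t` of shape `lam ⊢ n`, obtained from the canonical
tableau `s` of shape `mu ⊢ k` by filling the cells of the horizontal strip `lam/mu` with the
values `k, …, n-1` (0-indexed) from left to right; encoded by the position of each value. -/
noncomputable def canonPosT (mu lam : ℕ → ℕ) (k n : ℕ) : Fin n → ℕ × ℕ :=
  fun v =>
    if (v : ℕ) < k then (canonRow mu (v : ℕ), canonCol mu (v : ℕ))
    else
      let j := (stripCols mu lam).getD ((v : ℕ) - k) 0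
      (colHeight mu j, j)

/-- The column stabilizer `C_u` of a Young tableau `u` encoded by its position function
`pos`: the permutations of the values preserving each column setwise. -/
noncomputable def CStab {m : ℕ} (pos : Fin m → ℕ × ℕ) : Finset (Equiv.Perm (Fin m)) :=
  Finset.univ.filter fun π => ∀ v, (pos (π v)).2 = (pos v).2

/-- The pair of tabloids `({πs}, {π't})` covers the injection `σ`, where `s, t` are Young
tableaux with position functions `posS, posT` and `π, π'` relabel their values: the value
`i` occupies the cell `posS (π⁻¹ i)` of `πs`, so the condition
`row_{πs}(i) = row_{π't}(σ i)` reads `(posS (π⁻¹ i)).1 = (posT (π'⁻¹ (σ i))).1`. -/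
def coversPerm {k n : ℕ} (posS : Fin k → ℕ × ℕ) (posT : Fin n → ℕ × ℕ)
    (π : Equiv.Perm (Fin k)) (π' : Equiv.Perm (Fin n)) (σ : Fin k ↪ Fin n) : Prop :=
  ∀ i, (posS (π⁻¹ i)).1 = (posT (π'⁻¹ (σ i))).1

/-- The identity injection `[k] ↪ [n]`. -/
def idInj {k n : ℕ} (hkn : k ≤ n) : Fin k ↪ Fin n :=
  ⟨Fin.castLE hkn, Fin.castLE_injective hkn⟩

/-- The action of `S_k × S_n` on the set `S_{k,n}` of injections `[k] ↪ [n]`: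
`(π, ρ) · σ = ρ ∘ σ ∘ π⁻¹`. -/
def injAct {k n : ℕ} (π : Equiv.Perm (Fin k)) (ρ : Equiv.Perm (Fin n))
    (σ : Fin k ↪ Fin n) : Fin k ↪ Fin n :=
  (π.symm.toEmbedding.trans σ).trans ρ.toEmbedding

/-- `(π, ρ)` belongs to the subgroup `K = diag(S_k) × S_{n−k} ≤ S_k × S_n`: `ρ` restricted
to `[k]` equals `π`, and `ρ` fixes the set `{k+1, …, n}` (setwise). -/
def IsInK {k n : ℕ} (hkn : k ≤ n) (π : Equiv.Perm (Fin k)) (ρ : Equiv.Perm (Fin n)) : Prop :=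
  (∀ i : Fin k, ρ (Fin.castLE hkn i) = Fin.castLE hkn (π i)) ∧
  (∀ j : Fin n, k ≤ (j : ℕ) → k ≤ ((ρ j : Fin n) : ℕ))

/-- The `K`-orbit of the injection `σ0` in `S_{k,n}`. -/
noncomputable def orbitK {k n : ℕ} (hkn : k ≤ n) (σ0 : Fin k ↪ Fin n) :
    Finset (Fin k ↪ Fin n) :=
  Finset.univ.filter fun σ =>
    ∃ (π : Equiv.Perm (Fin k)) (ρ : Equiv.Perm (Fin n)), IsInK hkn π ρ ∧ injAct π ρ σ0 = σ


-- ===================== auxiliary lemmas =====================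

section PartFunAux
variable {k : ℕ} (p : Nat.Partition k)

noncomputable def pcnt (a : ℕ) : ℕ := Multiset.card (p.parts.filter (fun x => a ≤ x))

lemma pcnt_antitone : Antitone (pcnt p) := by
  intro a b hab
  apply Multiset.card_le_card
  apply Multiset.monotone_filter_right
  intro x hx; exact le_trans hab hx

lemma card_parts_le : Multiset.card p.parts ≤ k := by
  have h1 : (Multiset.card p.parts) • 1 ≤ p.parts.sum :=
    Multiset.card_nsmul_le_sum (fun x hx => p.parts_pos hx)
  simpa [p.parts_sum] using h1

lemma pcnt_le : ∀ a, pcnt p a ≤ k := fun _ =>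
  le_trans (Multiset.card_le_card (Multiset.filter_le _ _)) (card_parts_le p)

lemma mem_part_le {x : ℕ} (hx : x ∈ p.parts) : x ≤ k := by
  have := Multiset.single_le_sum (fun y _ => Nat.zero_le y) x hx
  simpa [p.parts_sum] using this

lemma partFun_def (i : ℕ) : partFun p i = sSup {a | i < pcnt p a} := rfl

lemma partFun_le_iff {a i : ℕ} (ha : 1 ≤ a) : a ≤ partFun p i ↔ i < pcnt p a := by
  have hbdd : BddAbove {a | i < pcnt p a} := by
    refine ⟨k, fun b hb => ?_⟩
    by_contra hbk
    push_neg at hbk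
    have : pcnt p b = 0 := by
      rw [pcnt, Multiset.card_eq_zero, Multiset.filter_eq_nil]
      intro x hx
      exact fun hbx => absurd (le_trans hbx (mem_part_le p hx)) (by omega)
    simp only [Set.mem_setOf_eq, this] at hb; omega
  constructor
  · intro hle
    rcases Set.eq_empty_or_nonempty {a | i < pcnt p a} with he | hne
    · rw [partFun_def, he] at hle; simp at hle; omega
    · have hmem := Nat.sSup_mem hne hbdd
      rw [← partFun_def] at hmem
      have : pcnt p (partFun p i) ≤ pcnt p a := pcnt_antitone p hle
      exact lt_of_lt_of_le hmem this
  · intro h; exact le_csSup hbdd h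

lemma partFun_le_k (i : ℕ) : partFun p i ≤ k := by
  rcases Set.eq_empty_or_nonempty {a | i < pcnt p a} with he | hne
  · rw [partFun_def, he]; simp
  · rw [partFun_def]
    exact csSup_le hne (fun b hb => by
      by_contra hbk
      push_neg at hbk
      have : pcnt p b = 0 := by
        rw [pcnt, Multiset.card_eq_zero, Multiset.filter_eq_nil]
        intro x hx
        exact fun hbx => absurd (le_trans hbx (mem_part_le p hx)) (by omega)
      simp only [Set.mem_setOf_eq, this] at hb; omega)

lemma partFun_antitone : Antitone (partFun p) := by
  intro i j hij
  rcases Nat.eq_zero_or_pos (partFun p j) with h0 | hpos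
  · omega
  · have h1 := (partFun_le_iff p hpos (i := j)).mp (le_refl _)
    exact (partFun_le_iff p hpos).mpr (by omega)

lemma partFun_eq_zero {i : ℕ} (hi : k ≤ i) : partFun p i = 0 := by
  by_contra h0
  have hpos : 1 ≤ partFun p i := by omega
  have := (partFun_le_iff p hpos).mp (le_refl _)
  have h2 := pcnt_le p (partFun p i)
  omega

lemma sum_pcnt_aux (N : ℕ) : ∀ (s : Multiset ℕ), (∀ x ∈ s, x ≤ N) →
    ∑ a ∈ Finset.range N, Multiset.card (s.filter (fun x => a + 1 ≤ x)) = s.sum := by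
  intro s
  induction s using Multiset.induction with
  | empty => simp
  | cons x s ih =>
    intro h
    have hx : x ≤ N := h x (Multiset.mem_cons_self _ _)
    have hs : ∀ y ∈ s, y ≤ N := fun y hy => h y (Multiset.mem_cons_of_mem hy)
    simp only [Multiset.filter_cons, Multiset.sum_cons]
    rw [Finset.sum_congr rfl (fun a _ => Multiset.card_add _ _)]
    rw [Finset.sum_add_distrib, ih hs]
    have : ∑ a ∈ Finset.range N, Multiset.card (if a + 1 ≤ x then ({x} : Multiset ℕ) else 0) = x := by
      simp only [apply_ite Multiset.card, Multiset.card_singleton, Multiset.card_zero]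
      rw [← Finset.card_filter]
      have : (Finset.range N).filter (fun a => a + 1 ≤ x) = Finset.range x := by
        ext a; simp only [Finset.mem_filter, Finset.mem_range]; omega
      rw [this, Finset.card_range]
    omega

lemma sum_partFun {N : ℕ} (hN : k ≤ N) : ∑ i ∈ Finset.range N, partFun p i = k := by
  have h1 : ∀ i, partFun p i = ((Finset.range k).filter (fun a => a + 1 ≤ partFun p i)).card := by
    intro i
    have : (Finset.range k).filter (fun a => a + 1 ≤ partFun p i) = Finset.range (partFun p i) := by
      ext a; simp only [Finset.mem_filter, Finset.mem_range]
      have := partFun_le_k p i; omega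
    rw [this, Finset.card_range]
  calc ∑ i ∈ Finset.range N, partFun p i
      = ∑ i ∈ Finset.range N, ∑ a ∈ Finset.range k, (if a + 1 ≤ partFun p i then 1 else 0) := by
        refine Finset.sum_congr rfl fun i _ => ?_
        conv_lhs => rw [h1 i, Finset.card_filter]
    _ = ∑ a ∈ Finset.range k, ∑ i ∈ Finset.range N, (if a + 1 ≤ partFun p i then 1 else 0) :=
        Finset.sum_comm
    _ = ∑ a ∈ Finset.range k, pcnt p (a + 1) := by
        refine Finset.sum_congr rfl fun a _ => ?_
        rw [← Finset.card_filter]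
        have heq : (Finset.range N).filter (fun i => a + 1 ≤ partFun p i)
            = Finset.range (pcnt p (a + 1)) := by
          ext i; simp only [Finset.mem_filter, Finset.mem_range]
          constructor
          · rintro ⟨-, h2⟩; exact (partFun_le_iff p (by omega)).mp h2
          · intro h2
            refine ⟨lt_of_lt_of_le (lt_of_lt_of_le h2 (pcnt_le p _)) hN, ?_⟩
            exact (partFun_le_iff p (by omega)).mpr h2
        rw [heq, Finset.card_range]
    _ = k := by
        have := sum_pcnt_aux k p.parts (fun x hx => mem_part_le p hx)
        simpa [pcnt, p.parts_sum] using this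

end PartFunAux

def rowSum (mu : ℕ → ℕ) (i : ℕ) : ℕ := ∑ a ∈ Finset.range i, mu a

lemma canonRow_def' (mu : ℕ → ℕ) (v : ℕ) :
    canonRow mu v = sInf {i | v < rowSum mu (i + 1)} := rfl
lemma canonCol_def' (mu : ℕ → ℕ) (v : ℕ) :
    canonCol mu v = v - rowSum mu (canonRow mu v) := rfl

section Rows
variable {mu : ℕ → ℕ} {k : ℕ} (hanti : Antitone mu)
  (hzero : ∀ i, k ≤ i → mu i = 0) (hsum : ∑ i ∈ Finset.range k, mu i = k)

lemma P_mono : Monotone (rowSum mu) := fun _ _ hij =>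
  Finset.sum_le_sum_of_subset (Finset.range_subset_range.mpr hij)

lemma P_succ (i : ℕ) : rowSum mu (i + 1) = rowSum mu i + mu i := Finset.sum_range_succ _ _

include hzero hsum in
lemma P_eq_k {N : ℕ} (hN : k ≤ N) : rowSum mu N = k := by
  have h : ∑ a ∈ Finset.range N, mu a = ∑ a ∈ Finset.range k, mu a := by
    symm
    apply Finset.sum_subset (Finset.range_subset_range.mpr hN)
    intro x _ hx
    exact hzero x (by simpa using hx)
  rw [rowSum, h, hsum]

include hzero hsum in
lemma P_le_k (i : ℕ) : rowSum mu i ≤ k := by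
  rcases le_total i k with h | h
  · calc rowSum mu i ≤ rowSum mu k := P_mono h
      _ = k := P_eq_k hzero hsum (le_refl k)
  · rw [P_eq_k hzero hsum h]

include hzero hsum in
lemma canonRow_spec {v : ℕ} (hv : v < k) :
    rowSum mu (canonRow mu v) ≤ v ∧ v < rowSum mu (canonRow mu v + 1) := by
  have hne : (Set.Nonempty {i | v < rowSum mu (i + 1)}) := ⟨k, by
    simp only [Set.mem_setOf_eq]; rw [P_eq_k hzero hsum (by omega)]; exact hv⟩
  have hmem := Nat.sInf_mem hne
  rw [← canonRow_def'] at hmem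
  refine ⟨?_, hmem⟩
  rcases Nat.eq_zero_or_pos (canonRow mu v) with h0 | hpos
  · rw [h0]; simp [rowSum]
  · by_contra hlt
    push_neg at hlt
    have h3 : canonRow mu v - 1 + 1 = canonRow mu v := by omega
    have h2 : canonRow mu v ≤ canonRow mu v - 1 := by
      conv_lhs => rw [canonRow_def']
      apply Nat.sInf_le
      show v < rowSum mu (canonRow mu v - 1 + 1)
      rw [h3]; exact hlt
    omega

lemma canonRow_eq {v i : ℕ} (h1 : rowSum mu i ≤ v) (h2 : v < rowSum mu (i + 1)) :
    canonRow mu v = i := by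
  rw [canonRow_def']
  have hle : sInf {i | v < rowSum mu (i + 1)} ≤ i := Nat.sInf_le h2
  by_contra hne
  have hlt : sInf {i | v < rowSum mu (i + 1)} < i := lt_of_le_of_ne hle hne
  have hmem : v < rowSum mu (sInf {i | v < rowSum mu (i + 1)} + 1) :=
    Nat.sInf_mem (⟨i, h2⟩ : Set.Nonempty {i | v < rowSum mu (i + 1)})
  have : rowSum mu (sInf {i | v < rowSum mu (i + 1)} + 1) ≤ rowSum mu i := P_mono (by omega)
  omega

include hzero hsum in
lemma canonCol_spec {v : ℕ} (hv : v < k) :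
    v = rowSum mu (canonRow mu v) + canonCol mu v ∧ canonCol mu v < mu (canonRow mu v) := by
  obtain ⟨h1, h2⟩ := canonRow_spec hzero hsum hv
  have hP := P_succ (mu := mu) (canonRow mu v)
  rw [canonCol_def']
  omega

include hanti hzero in
lemma colHeight_iff (j i : ℕ) : i < colHeight mu j ↔ j < mu i := by
  have hne : (Set.Nonempty {i | mu i ≤ j}) := ⟨k, by simp [hzero k (le_refl k)]⟩
  have hmem := Nat.sInf_mem hne
  constructor
  · intro h
    by_contra hle
    push_neg at hle
    have := Nat.sInf_le (show i ∈ {i | mu i ≤ j} from hle)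
    rw [colHeight] at h; omega
  · intro h
    by_contra hle
    push_neg at hle
    rw [colHeight] at hle
    have h2 : mu i ≤ mu (sInf {i | mu i ≤ j}) := hanti hle
    simp only [Set.mem_setOf_eq] at hmem
    omega

include hanti hzero hsum in
lemma fiber_card (j : ℕ) :
    (Finset.univ.filter fun v : Fin k => canonCol mu (v : ℕ) = j).card = colHeight mu j := by
  rw [← Finset.card_range (colHeight mu j)]
  apply Finset.card_bij (fun (v : Fin k) _ => canonRow mu (v : ℕ))
  · intro v hv
    simp only [Finset.mem_filter] at hv
    rw [Finset.mem_range, colHeight_iff hanti hzero]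
    have := (canonCol_spec hzero hsum v.isLt).2
    omega
  · intro v1 h1 v2 h2 heq
    simp only [Finset.mem_filter] at h1 h2
    have e1 := (canonCol_spec hzero hsum v1.isLt).1
    have e2 := (canonCol_spec hzero hsum v2.isLt).1
    apply Fin.ext
    rw [heq] at e1
    omega
  · intro i hi
    rw [Finset.mem_range, colHeight_iff hanti hzero] at hi
    have hvk : rowSum mu i + j < k := by
      have := P_succ (mu := mu) i
      have := P_le_k hzero hsum (i + 1)
      omega
    refine ⟨⟨rowSum mu i + j, hvk⟩, ?_, ?_⟩
    · simp only [Finset.mem_filter, Finset.mem_univ, true_and, Fin.val_mk]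
      have hr : canonRow mu (rowSum mu i + j) = i := by
        apply canonRow_eq (by omega)
        rw [P_succ]; omega
      rw [canonCol_def', hr]
      omega
    · show canonRow mu ((⟨rowSum mu i + j, hvk⟩ : Fin k) : ℕ) = i
      simp only [Fin.val_mk]
      apply canonRow_eq (show rowSum mu i ≤ rowSum mu i + j by omega)
      rw [P_succ]; omega
end Rows

lemma card_CStab {k : ℕ} (pos : Fin k → ℕ × ℕ) (hg : ∀ v, (pos v).2 < k)
    (h : ℕ → ℕ) (hfib : ∀ j, (Finset.univ.filter fun v : Fin k => (pos v).2 = j).card = h j) :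
    (CStab pos).card = ∏ j ∈ Finset.range k, (h j).factorial := by
  set g : Fin k → ℕ := fun v => (pos v).2 with hgdef
  have h1 : (CStab pos).card = Fintype.card {π : Equiv.Perm (Fin k) // g ∘ π = g} := by
    rw [Fintype.card_subtype]
    apply Finset.card_bij (fun π _ => π)
    · intro π hπ
      simp only [CStab, Finset.mem_filter, Finset.mem_univ, true_and] at *
      funext v; exact hπ v
    · intro a _ b _ hab; exact hab
    · intro π hπ
      refine ⟨π, ?_, rfl⟩
      simp only [CStab, Finset.mem_filter, Finset.mem_univ, true_and] at *
      intro v; exact congrFun hπ v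
  rw [h1, DomMulAct.stabilizer_card' g]
  have himg : Finset.univ.image g ⊆ Finset.range k := by
    intro j hj
    simp only [Finset.mem_image] at hj
    obtain ⟨v, _, rfl⟩ := hj
    exact Finset.mem_range.mpr (hg v)
  rw [Finset.prod_subset himg]
  · apply Finset.prod_congr rfl
    intro j _
    congr 1
    rw [Fintype.card_subtype, hfib j]
  · intro j _ hj
    have : Fintype.card {a // g a = j} = 0 := by
      rw [Fintype.card_eq_zero_iff]
      refine ⟨fun a => hj ?_⟩
      simp only [Finset.mem_image]
      exact ⟨a.1, Finset.mem_univ _, a.2⟩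
    rw [this]
    rfl

theorem Equiv.Perm.apply_inv_self {α : Type*} (f : Equiv.Perm α) (x : α) : f (f⁻¹ x) = x :=
  f.apply_symm_apply x

theorem Equiv.Perm.inv_apply_self {α : Type*} (f : Equiv.Perm α) (x : α) : f⁻¹ (f x) = x :=
  f.symm_apply_apply x

section Grp
variable {k n : ℕ} (hkn : k ≤ n)

lemma injAct_apply (π : Equiv.Perm (Fin k)) (ρ : Equiv.Perm (Fin n)) (σ : Fin k ↪ Fin n)
    (i : Fin k) : injAct π ρ σ i = ρ (σ (π⁻¹ i)) := rfl

lemma injAct_injAct (a c : Equiv.Perm (Fin k)) (b d : Equiv.Perm (Fin n)) (σ : Fin k ↪ Fin n) :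
    injAct a b (injAct c d σ) = injAct (a * c) (b * d) σ := by
  ext i
  simp only [injAct_apply, Equiv.Perm.mul_apply, mul_inv_rev]

lemma injAct_one_one (σ : Fin k ↪ Fin n) : injAct (1 : Equiv.Perm (Fin k)) 1 σ = σ := by
  ext i; simp [injAct_apply]

lemma IsInK.mul {π₁ π₂ : Equiv.Perm (Fin k)} {ρ₁ ρ₂ : Equiv.Perm (Fin n)}
    (h1 : IsInK hkn π₁ ρ₁) (h2 : IsInK hkn π₂ ρ₂) : IsInK hkn (π₁ * π₂) (ρ₁ * ρ₂) := by
  constructor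
  · intro i
    simp only [Equiv.Perm.mul_apply, h2.1 i, h1.1 (π₂ i)]
  · intro j hj
    exact h1.2 _ (h2.2 j hj)

lemma IsInK.inv {π : Equiv.Perm (Fin k)} {ρ : Equiv.Perm (Fin n)}
    (h : IsInK hkn π ρ) : IsInK hkn π⁻¹ ρ⁻¹ := by
  constructor
  · intro i
    apply ρ.injective
    rw [Equiv.Perm.apply_inv_self, h.1 (π⁻¹ i), Equiv.Perm.apply_inv_self]
  · intro j hj
    by_contra hc
    push_neg at hc
    have he : (ρ⁻¹ j : Fin n) = Fin.castLE hkn ⟨(ρ⁻¹ j : Fin n), hc⟩ := by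
      apply Fin.ext; rfl
    have := h.1 ⟨(ρ⁻¹ j : Fin n), hc⟩
    rw [← he, Equiv.Perm.apply_inv_self] at this
    rw [this] at hj
    simp only [Fin.coe_castLE] at hj
    exact absurd hj (by omega)

lemma mem_orbitK {σ0 σ : Fin k ↪ Fin n} :
    σ ∈ orbitK hkn σ0 ↔ ∃ (π : Equiv.Perm (Fin k)) (ρ : Equiv.Perm (Fin n)),
      IsInK hkn π ρ ∧ injAct π ρ σ0 = σ := by
  simp [orbitK]

lemma orbitK_closed {σ0 σ : Fin k ↪ Fin n} (hσ : σ ∈ orbitK hkn σ0)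
    {a : Equiv.Perm (Fin k)} {b : Equiv.Perm (Fin n)} (hab : IsInK hkn a b) :
    injAct a b σ ∈ orbitK hkn σ0 := by
  rw [mem_orbitK] at *
  obtain ⟨π, ρ, hK, hact⟩ := hσ
  exact ⟨a * π, b * ρ, hab.mul hkn hK, by rw [← hact, injAct_injAct]⟩

/-- the equiv between `Fin k` and the initial segment of `Fin n` -/
def finSubEquiv : Fin k ≃ {j : Fin n // (j : ℕ) < k} where
  toFun i := ⟨Fin.castLE hkn i, i.isLt⟩
  invFun j := ⟨(j.1 : ℕ), j.2⟩
  left_inv _ := rfl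
  right_inv _ := rfl

noncomputable def extP (π : Equiv.Perm (Fin k)) : Equiv.Perm (Fin n) :=
  π.extendDomain (finSubEquiv hkn)

lemma extP_castLE (π : Equiv.Perm (Fin k)) (i : Fin k) :
    extP hkn π (Fin.castLE hkn i) = Fin.castLE hkn (π i) := by
  have : Fin.castLE hkn i = ((finSubEquiv hkn i : {j : Fin n // (j : ℕ) < k}) : Fin n) := rfl
  rw [extP, this, Equiv.Perm.extendDomain_apply_image]
  rfl

lemma extP_fix (π : Equiv.Perm (Fin k)) {j : Fin n} (hj : k ≤ (j : ℕ)) :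
    extP hkn π j = j :=
  Equiv.Perm.extendDomain_apply_not_subtype _ _ (by omega)

lemma extP_inv (π : Equiv.Perm (Fin k)) : (extP hkn π)⁻¹ = extP hkn π⁻¹ :=
  Equiv.Perm.extendDomain_inv _ _

lemma sign_extP (π : Equiv.Perm (Fin k)) : Equiv.Perm.sign (extP hkn π) = Equiv.Perm.sign π :=
  Equiv.Perm.sign_extendDomain _ _

lemma isInK_extP (π : Equiv.Perm (Fin k)) : IsInK hkn π (extP hkn π) :=
  ⟨fun i => extP_castLE hkn π i, fun j hj => by rw [extP_fix hkn π hj]; exact hj⟩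

lemma mem_CStab {m : ℕ} {pos : Fin m → ℕ × ℕ} {π : Equiv.Perm (Fin m)} :
    π ∈ CStab pos ↔ ∀ v, (pos (π v)).2 = (pos v).2 := by simp [CStab]

lemma CStab_mul {m : ℕ} {pos : Fin m → ℕ × ℕ} {π₁ π₂ : Equiv.Perm (Fin m)}
    (h1 : π₁ ∈ CStab pos) (h2 : π₂ ∈ CStab pos) : π₁ * π₂ ∈ CStab pos := by
  rw [mem_CStab] at *
  intro v
  rw [Equiv.Perm.mul_apply, h1 (π₂ v), h2 v]

lemma CStab_inv {m : ℕ} {pos : Fin m → ℕ × ℕ} {π : Equiv.Perm (Fin m)}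
    (h : π ∈ CStab pos) : π⁻¹ ∈ CStab pos := by
  rw [mem_CStab] at *
  intro v
  conv_rhs => rw [← Equiv.Perm.apply_inv_self π v]
  rw [h (π⁻¹ v)]

lemma extP_mem_CStabT (mu lam : ℕ → ℕ) {π : Equiv.Perm (Fin k)}
    (hπ : π ∈ CStab (canonPosS mu k)) :
    extP hkn π ∈ CStab (canonPosT mu lam k n) := by
  rw [mem_CStab] at *
  intro v
  by_cases hv : (v : ℕ) < k
  · have hT : ∀ w : Fin k, (canonPosT mu lam k n (Fin.castLE hkn w)).2 = canonCol mu (w : ℕ) := by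
      intro w
      simp only [canonPosT, Fin.coe_castLE]
      rw [if_pos w.isLt]
    have hveq : v = Fin.castLE hkn ⟨(v : ℕ), hv⟩ := Fin.ext rfl
    rw [hveq, extP_castLE, hT, hT]
    exact hπ ⟨(v : ℕ), hv⟩
  · rw [extP_fix hkn π (by omega)]

lemma covers_iff {posS : Fin k → ℕ × ℕ} {posT : Fin n → ℕ × ℕ} (π : Equiv.Perm (Fin k))
    (π' ρ : Equiv.Perm (Fin n)) (σ : Fin k ↪ Fin n) :
    coversPerm posS posT 1 (ρ * π') (injAct π⁻¹ ρ σ) ↔ coversPerm posS posT π π' σ := by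
  have key : ∀ i, (ρ * π')⁻¹ ((injAct π⁻¹ ρ σ) i) = π'⁻¹ (σ (π i)) := by
    intro i
    rw [injAct_apply, inv_inv, mul_inv_rev, Equiv.Perm.mul_apply, Equiv.Perm.inv_apply_self]
  unfold coversPerm
  constructor
  · intro h i
    have := h (π⁻¹ i)
    rw [key, Equiv.Perm.apply_inv_self] at this
    simpa using this
  · intro h i
    rw [key]
    have := h (π i)
    rw [Equiv.Perm.inv_apply_self] at this
    simpa using this

end Grp

/-- For the canonical pair `(s, t)` of standard Young tableaux for `(μ, λ)` and every
`K`-orbit `C ⊆ S_{k,n}` (the orbit of an arbitrary `σ0`):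
`Σ_{σ ∈ C} Σ_{π ∈ C_s} Σ_{π' ∈ C_t} sgn(π)·sgn(π')·1[({πs},{π't}) covers σ]
  = (μ^⊤)! · Σ_{σ ∈ C} Σ_{π ∈ C_t} sgn(π)·1[({s},{πt}) covers σ]`,
where `(μ^⊤)! = ∏_j (μ^⊤_j)!`. -/
theorem stmt_9 (k n : ℕ) (hkn : k ≤ n) (mu : Nat.Partition k) (lam : Nat.Partition n)
    (hstrip : IsHorizStrip (partFun mu) (partFun lam)) (σ0 : Fin k ↪ Fin n) :
    ∑ σ ∈ orbitK hkn σ0,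
      ∑ π ∈ CStab (canonPosS (partFun mu) k),
        ∑ π' ∈ CStab (canonPosT (partFun mu) (partFun lam) k n),
          (Equiv.Perm.sign π : ℤ) * (Equiv.Perm.sign π' : ℤ) *
            (if coversPerm (canonPosS (partFun mu) k)
                (canonPosT (partFun mu) (partFun lam) k n) π π' σ then 1 else 0) =
    ((∏ j ∈ Finset.range k, Nat.factorial (colHeight (partFun mu) j) : ℕ) : ℤ) *
      ∑ σ ∈ orbitK hkn σ0,
        ∑ π ∈ CStab (canonPosT (partFun mu) (partFun lam) k n),
          (Equiv.Perm.sign π : ℤ) *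
            (if coversPerm (canonPosS (partFun mu) k)
                (canonPosT (partFun mu) (partFun lam) k n) 1 π σ then 1 else 0) := by
    classical
  set posS := canonPosS (partFun mu) k with hposS
  set posT := canonPosT (partFun mu) (partFun lam) k n with hposT
  set C := orbitK hkn σ0 with hC
  set T := CStab posT with hT
  set S := CStab posS with hS
  have hanti : Antitone (partFun mu) := partFun_antitone mu
  have hzero : ∀ i, k ≤ i → partFun mu i = 0 := fun i hi => partFun_eq_zero mu hi
  have hsum : ∑ i ∈ Finset.range k, partFun mu i = k := sum_partFun mu (le_refl k)
  -- the inner sum appearing on the RHS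
  set G : (Fin k ↪ Fin n) → ℤ := fun σ =>
    ∑ π ∈ T, (Equiv.Perm.sign π : ℤ) * (if coversPerm posS posT 1 π σ then 1 else 0) with hG
  -- key step: for each π ∈ S, the (σ, π') double sum is independent of π
  have key : ∀ π ∈ S,
      (∑ σ ∈ C, ∑ π' ∈ T, (Equiv.Perm.sign π : ℤ) * (Equiv.Perm.sign π' : ℤ) *
        (if coversPerm posS posT π π' σ then 1 else 0)) = ∑ σ ∈ C, G σ := by
    intro π hπ
    set ρ : Equiv.Perm (Fin n) := extP hkn π⁻¹ with hρ
    have hρT : ρ ∈ T := extP_mem_CStabT hkn _ _ (CStab_inv hπ)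
    have hρK : IsInK hkn π⁻¹ ρ := isInK_extP hkn π⁻¹
    have hρiT : ρ⁻¹ ∈ T := CStab_inv hρT
    have hρinv : ρ⁻¹ = extP hkn π := by rw [hρ, extP_inv, inv_inv]
    have hρiK : IsInK hkn π ρ⁻¹ := by rw [hρinv]; exact isInK_extP hkn π
    have hsignρ : (Equiv.Perm.sign ρ : ℤ) = (Equiv.Perm.sign π : ℤ) := by
      rw [hρ, sign_extP]; simp
    -- step 1: inner reindexing π' ↦ ρ * π'
    have step1 : ∀ σ, (∑ π' ∈ T, (Equiv.Perm.sign π : ℤ) * (Equiv.Perm.sign π' : ℤ) *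
        (if coversPerm posS posT π π' σ then 1 else 0)) = G (injAct π⁻¹ ρ σ) := by
      intro σ
      rw [hG]
      apply Finset.sum_bij' (fun π' _ => ρ * π') (fun q _ => ρ⁻¹ * q)
      · intro π' hπ'; exact CStab_mul hρT hπ'
      · intro q hq; exact CStab_mul hρiT hq
      · intro π' _; group
      · intro q _; group
      · intro π' _
        rw [if_congr (covers_iff π π' ρ σ) rfl rfl]
        congr 1
        rw [map_mul, Units.val_mul, hsignρ]
    -- step 2: outer reindexing σ ↦ injAct π⁻¹ ρ σ
    have step2 : (∑ σ ∈ C, G (injAct π⁻¹ ρ σ)) = ∑ σ ∈ C, G σ := by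
      apply Finset.sum_bij' (fun σ _ => injAct π⁻¹ ρ σ) (fun σ _ => injAct π ρ⁻¹ σ)
      · intro σ hσ; exact orbitK_closed hkn hσ hρK
      · intro σ hσ; exact orbitK_closed hkn hσ hρiK
      · intro σ _
        rw [injAct_injAct]
        simp [injAct_one_one]
      · intro σ _
        rw [injAct_injAct]
        simp [injAct_one_one]
      · intro σ _; rfl
    calc (∑ σ ∈ C, ∑ π' ∈ T, (Equiv.Perm.sign π : ℤ) * (Equiv.Perm.sign π' : ℤ) *
          (if coversPerm posS posT π π' σ then 1 else 0))
        = ∑ σ ∈ C, G (injAct π⁻¹ ρ σ) := Finset.sum_congr rfl (fun σ _ => step1 σ)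
      _ = ∑ σ ∈ C, G σ := step2
  -- cardinality of S
  have hcard : S.card = ∏ j ∈ Finset.range k, Nat.factorial (colHeight (partFun mu) j) := by
    apply card_CStab posS
    · intro v
      show canonCol (partFun mu) (v : ℕ) < k
      rw [canonCol_def']
      have := v.isLt
      omega
    · intro j
      exact fiber_card hanti hzero hsum j
  rw [Finset.sum_comm]
  calc ∑ π ∈ S, ∑ σ ∈ C, ∑ π' ∈ T, (Equiv.Perm.sign π : ℤ) * (Equiv.Perm.sign π' : ℤ) *
        (if coversPerm posS posT π π' σ then 1 else 0)
      = ∑ _π ∈ S, ∑ σ ∈ C, G σ := Finset.sum_congr rfl key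
    _ = (S.card : ℤ) * ∑ σ ∈ C, G σ := by rw [Finset.sum_const, nsmul_eq_mul]
    _ = _ := by rw [hcard]
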